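/- Let X be a Hausdorff uniform space with no isolated points and f : X → X continuous. If f is topologically transitive and the set of periodic points of f is dense in X (and f has at least two periodic points with disjoint orbits), then f has sensitive dependence on initial conditions: there is an entourage W such that for every x ∈ X and every neighborhood N of x there exist y ∈ N and n ∈ ℕ with (fⁿ(x), fⁿ(y)) ∉ W. -/

import Mathlib

/-!
The forward orbits of the two periodic points `r`, `s` are finite and disjoint, so some entourage
`V` separates them, and every point is `V`-far from the orbit of `r` or from that of `s`. Take `W`
symmetric with `(W ○ W) ○ (W ○ W) ⊆ V`, a point `x` with a neighbourhood `N`, and `q ∈ {r, s}`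
whose orbit is `V`-far from `x`. Inside `N` there is a periodic point `p` with `(x, p) ∈ W`, of
period `m`; by transitivity some `z ∈ N` has an iterate `f^[n] z`, with `m ∣ n`, that is `W`-close
to the orbit of `q`. If both `f^[n] p = p` and `f^[n] z` were `W`-close to `f^[n] x`, then `x`
would be within four `W`-steps of the orbit of `q`.
-/

open Function Set Filter Topology UniformSpace Uniformity
open scoped SetRel

theorem Function.IsPeriodicPt.finite_range_iterate {α : Type*} {f : α → α} {n : ℕ} {x : α}
    (hx : IsPeriodicPt f n x) (hn : 0 < n) : (range fun k => f^[k] x).Finite := by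
  refine ((Set.finite_lt_nat n).image fun k => f^[k] x).subset ?_
  rintro _ ⟨k, rfl⟩
  exact ⟨k % n, Nat.mod_lt k hn, hx.iterate_mod_apply k⟩

section Dynamics

variable {X : Type*} [UniformSpace X] {f : X → X}

theorem exists_iterate_dvd_mem_ball_iterate (hf : Continuous f)
    (htrans : ∀ U V : Set X, IsOpen U → IsOpen V → U.Nonempty → V.Nonempty →
        ∃ n ≥ 1, (f^[n] '' U ∩ V).Nonempty)
    {U : Set X} (hU : IsOpen U) (hU₀ : U.Nonempty) (q : X) {m : ℕ} (hm : 0 < m)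
    {W : SetRel X X} (hW : W ∈ 𝓤 X) :
    ∃ z ∈ U, ∃ n i : ℕ, m ∣ n ∧ (f^[i] q, f^[n] z) ∈ W := by
  set V : Set X := ⋂ i ∈ Finset.range (m + 1), f^[i] ⁻¹' ball (f^[i] q) W
  have hV : V ∈ 𝓝 q := (Filter.biInter_finset_mem _).mpr fun i _ =>
    (hf.iterate i).continuousAt.preimage_mem_nhds (ball_mem_nhds _ hW)
  obtain ⟨k, -, _, ⟨z, hzU, rfl⟩, hzV⟩ := htrans U (interior V) hU isOpen_interior hU₀
    ⟨q, mem_interior_iff_mem_nhds.mpr hV⟩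
  have hkn : k ≤ m * (k / m + 1) := by
    have := Nat.lt_mul_div_succ k hm
    omega
  have hnk : m * (k / m + 1) - k ≤ m := by
    have := Nat.div_mul_le_self k m
    rw [Nat.mul_add, mul_one, mul_comm]
    omega
  refine ⟨z, hzU, m * (k / m + 1), m * (k / m + 1) - k, dvd_mul_right _ _, ?_⟩
  have hz := mem_iInter₂.mp (interior_subset hzV) _ (Finset.mem_range_succ_iff.mpr hnk)
  rwa [mem_preimage, ← iterate_add_apply, Nat.sub_add_cancel hkn] at hz

theorem exists_iterate_notMem_of_forall_iterate_notMem (hf : Continuous f)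
    (htrans : ∀ U V : Set X, IsOpen U → IsOpen V → U.Nonempty → V.Nonempty →
        ∃ n ≥ 1, (f^[n] '' U ∩ V).Nonempty)
    (hdense : Dense {p : X | ∃ n ≥ 1, f^[n] p = p})
    {W : SetRel X X} (hW : W ∈ 𝓤 X) [W.IsSymm] {x q : X}
    (hq : ∀ i, (f^[i] q, x) ∉ (W ○ W) ○ (W ○ W)) {N : Set X} (hN : N ∈ 𝓝 x) :
    ∃ y ∈ N, ∃ n : ℕ, (f^[n] x, f^[n] y) ∉ W := by
  set U := interior (N ∩ ball x W)
  have hxU : x ∈ U := mem_interior_iff_mem_nhds.mpr (inter_mem hN (ball_mem_nhds x hW))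
  obtain ⟨p, ⟨m, hm, hpm⟩, hpU⟩ := hdense.exists_mem_open isOpen_interior ⟨x, hxU⟩
  obtain ⟨z, hzU, n, i, ⟨l, rfl⟩, hqz⟩ :=
    exists_iterate_dvd_mem_ball_iterate hf htrans isOpen_interior ⟨x, hxU⟩ q hm hW
  have hpn : f^[m * l] p = p := (IsPeriodicPt.mul_const hpm l : IsPeriodicPt f (m * l) p)
  by_contra! hclose
  have hxp : (f^[m * l] x, p) ∈ W := hpn ▸ hclose p (interior_subset hpU).1 _
  have hzx : (f^[m * l] z, f^[m * l] x) ∈ W := W.symm (hclose z (interior_subset hzU).1 _)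
  have hpx : (p, x) ∈ W := W.symm (interior_subset hpU).2
  exact hq i ⟨_, ⟨_, hqz, hzx⟩, ⟨_, hxp, hpx⟩⟩

end Dynamics

theorem sensitive_of_chaotic_general
    {X : Type*} [UniformSpace X] [T2Space X]
    (f : X → X) (hf : Continuous f)
    (htrans : ∀ U V : Set X, IsOpen U → IsOpen V → U.Nonempty → V.Nonempty →
        ∃ n ≥ 1, (f^[n] '' U ∩ V).Nonempty)
    (hdense : Dense {p : X | ∃ n ≥ 1, f^[n] p = p})
    (r s : X) (hr : ∃ n ≥ 1, f^[n] r = r) (hs : ∃ n ≥ 1, f^[n] s = s)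
    (hdisj : (Set.range fun k : ℕ => f^[k] r) ∩ (Set.range fun k : ℕ => f^[k] s) = ∅) :
    ∃ W ∈ uniformity X, ∀ x : X, ∀ N ∈ nhds x, ∃ y ∈ N, ∃ n : ℕ,
      (f^[n] x, f^[n] y) ∉ W := by
  obtain ⟨a, ha, hra⟩ := hr
  obtain ⟨b, hb, hsb⟩ := hs
  obtain ⟨V, hV, hVdisj⟩ := (disjoint_iff_inter_eq_empty.mpr hdisj).exists_uniform_thickening
    (IsPeriodicPt.finite_range_iterate hra ha).isCompact
    (IsPeriodicPt.finite_range_iterate hsb hb).isClosed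
  obtain ⟨W₁, hW₁, -, hW₁V⟩ := comp_symm_mem_uniformity_sets hV
  obtain ⟨W, hW, hWsymm, hWW₁⟩ := comp_symm_mem_uniformity_sets hW₁
  have hWV : (W ○ W) ○ (W ○ W) ⊆ V := (SetRel.comp_subset_comp hWW₁ hWW₁).trans hW₁V
  refine ⟨W, hW, fun x N hN => ?_⟩
  obtain ⟨q, hq⟩ : ∃ q, ∀ i, (f^[i] q, x) ∉ V := by
    by_contra! h
    obtain ⟨i, hi⟩ := h r
    obtain ⟨j, hj⟩ := h s
    exact disjoint_left.mp hVdisj (mem_biUnion ⟨i, rfl⟩ hi) (mem_biUnion ⟨j, rfl⟩ hj)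
  exact exists_iterate_notMem_of_forall_iterate_notMem hf htrans hdense hW
    (fun i h => hq i (hWV h)) hN

/-- Theorem 1: chaotic implies sensitive dependence on initial conditions,
in a Hausdorff uniform space with no isolated points. -/
theorem sensitive_of_chaotic
    {X : Type*} [UniformSpace X] [T2Space X]
    (hni : ∀ x : X, (nhdsWithin x {x}ᶜ).NeBot)
    (f : X → X) (hf : Continuous f)
    (htrans : ∀ U V : Set X, IsOpen U → IsOpen V → U.Nonempty → V.Nonempty →
        ∃ n ≥ 1, (f^[n] '' U ∩ V).Nonempty)
    (hdense : Dense {p : X | ∃ n ≥ 1, f^[n] p = p})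
    (r s : X) (hr : ∃ n ≥ 1, f^[n] r = r) (hs : ∃ n ≥ 1, f^[n] s = s)
    (hdisj : (Set.range fun k : ℕ => f^[k] r) ∩ (Set.range fun k : ℕ => f^[k] s) = ∅) :
    ∃ W ∈ uniformity X, ∀ x : X, ∀ N ∈ nhds x, ∃ y ∈ N, ∃ n : ℕ,
      (f^[n] x, f^[n] y) ∉ W :=
  sensitive_of_chaotic_general f hf htrans hdense r s hr hs hdisj
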